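/- Let X₁,...,X_N be i.i.d. random variables supported on [0,1] with mean μ where N = ⌈8κ⌉ for some κ ≥ 1, and define μ̄(n) = (1/n)·Σ_{j≤n} Xⱼ. Then the event {√n·|μ̄(n) − μ| ≤ √(log(8κ)) for all n = 1,...,N} holds with probability at least 1 − 1/(4κ). -/

import Mathlib

/-!
By Hoeffding's lemma each `X j - μ` is `1/4`-sub-Gaussian, so by independence
`∑_{j<n} (X j - μ)` is `n/4`-sub-Gaussian, and the two-sided Chernoff bound gives
`P(√n·|μ̄(n) - μ| > L) ≤ 2 exp(-2L²) = 1/(32κ²)` for `L² = log(8κ)`, whatever `n`.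
For `n = 1` the deviation `|X₀ - μ| ≤ 1 ≤ L` never exceeds the threshold, so the union bound
only pays for `n = 2, …, N`, i.e. at most `(N - 1)/(32κ²) ≤ 8κ/(32κ²) = 1/(4κ)`.
-/

open MeasureTheory ProbabilityTheory Real
open scoped NNReal

lemma Real.sqrt_mul_abs_div_sub {x : ℝ} (hx : 0 < x) (s m : ℝ) :
    √x * |s / x - m| = |s - x * m| / √x := by
  have hfactor : s - x * m = x * (s / x - m) := by field_simp
  rw [hfactor, abs_mul, abs_of_pos hx, eq_div_iff (Real.sqrt_pos.2 hx).ne', mul_right_comm,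
    Real.mul_self_sqrt hx.le]

section Probability

variable {Ω : Type*} {mΩ : MeasurableSpace Ω} {P : Measure Ω}

lemma ofReal_one_sub_le_measure_of_measureReal_compl_le [IsProbabilityMeasure P] {s : Set Ω}
    {δ : ℝ} (h : P.real sᶜ ≤ δ) : ENNReal.ofReal (1 - δ) ≤ P s := by
  have hcover := measureReal_union_le (μ := P) s sᶜ
  rw [Set.union_compl_self, probReal_univ] at hcover
  rw [ENNReal.ofReal_le_iff_le_toReal (measure_ne_top P s), ← measureReal_def]
  linarith

lemma ae_abs_sub_integral_le_of_mem_Icc [IsProbabilityMeasure P] {X : Ω → ℝ} {a b : ℝ}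
    (hm : AEMeasurable X P) (hb : ∀ᵐ ω ∂P, X ω ∈ Set.Icc a b) :
    ∀ᵐ ω ∂P, |X ω - P[X]| ≤ b - a := by
  have hint := Integrable.of_mem_Icc a b hm hb
  have ha : a ≤ P[X] := by
    simpa using integral_mono_ae (integrable_const a) hint (hb.mono fun ω h ↦ h.1)
  have hb' : P[X] ≤ b := by
    simpa using integral_mono_ae hint (integrable_const b) (hb.mono fun ω h ↦ h.2)
  filter_upwards [hb] with ω hω
  exact abs_sub_le_iff.2 ⟨by linarith [hω.2], by linarith [hω.1]⟩

lemma ProbabilityTheory.HasSubgaussianMGF.measure_abs_ge_le {X : Ω → ℝ} {c : ℝ≥0}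
    (h : HasSubgaussianMGF X c P) {ε : ℝ} (hε : 0 ≤ ε) :
    P.real {ω | ε ≤ |X ω|} ≤ 2 * exp (-ε ^ 2 / (2 * c)) := by
  have : IsFiniteMeasure P := by simpa [integrable_const_iff] using h.integrable_exp_mul 0
  have hsub : {ω | ε ≤ |X ω|} ⊆ {ω | ε ≤ X ω} ∪ {ω | ε ≤ (-X) ω} := fun ω hω ↦
    (le_abs'.1 hω).symm.imp (fun hx ↦ by simpa using hx) (fun hx ↦ by simpa [le_neg] using hx)
  calc P.real {ω | ε ≤ |X ω|} ≤ P.real {ω | ε ≤ X ω} + P.real {ω | ε ≤ (-X) ω} :=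
        (measureReal_mono hsub).trans (measureReal_union_le _ _)
    _ ≤ 2 * exp (-ε ^ 2 / (2 * c)) := by
        linarith [h.measure_ge_le hε, h.neg.measure_ge_le hε]

variable [IsProbabilityMeasure P] {X : ℕ → Ω → ℝ} {a b μ : ℝ}

lemma hasSubgaussianMGF_sum_range_sub_of_mem_Icc (hmeas : ∀ j, AEMeasurable (X j) P)
    (hindep : iIndepFun X P) (hbdd : ∀ j, ∀ᵐ ω ∂P, X j ω ∈ Set.Icc a b)
    (hmean : ∀ j, P[X j] = μ) (n : ℕ) :
    HasSubgaussianMGF (fun ω ↦ ∑ j ∈ Finset.range n, X j ω - n * μ)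
      (n * (‖b - a‖₊ / 2) ^ 2) P := by
  have hcentered : iIndepFun (fun j ω ↦ X j ω - μ) P :=
    hindep.comp (fun _ x ↦ x - μ) fun _ ↦ measurable_sub_const μ
  have hsum := HasSubgaussianMGF.sum_of_iIndepFun hcentered (c := fun _ ↦ (‖b - a‖₊ / 2) ^ 2)
    (s := Finset.range n) fun j _ ↦ by
      simpa [hmean j] using hasSubgaussianMGF_of_mem_Icc (hmeas j) (hbdd j)
  simpa [Finset.sum_const, nsmul_eq_mul] using hsum

lemma measureReal_sqrt_mul_abs_empiricalMean_sub_gt_le (hmeas : ∀ j, AEMeasurable (X j) P)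
    (hindep : iIndepFun X P) (hbdd : ∀ j, ∀ᵐ ω ∂P, X j ω ∈ Set.Icc a b)
    (hmean : ∀ j, P[X j] = μ) {n : ℕ} (hn : 0 < n) {L : ℝ} (hL : 0 ≤ L) :
    P.real {ω | L < √n * |(∑ j ∈ Finset.range n, X j ω) / n - μ|} ≤
      2 * exp (-2 * L ^ 2 / (b - a) ^ 2) := by
  have hn' : (0 : ℝ) < n := Nat.cast_pos.2 hn
  have hsub : {ω | L < √n * |(∑ j ∈ Finset.range n, X j ω) / n - μ|} ⊆
      {ω | √n * L ≤ |∑ j ∈ Finset.range n, X j ω - n * μ|} := fun ω hω ↦ by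
    simp only [Set.mem_ofPred_eq, Real.sqrt_mul_abs_div_sub hn',
      lt_div_iff₀ (Real.sqrt_pos.2 hn')] at hω ⊢
    linarith
  have hexponent : -(√n * L) ^ 2 / (2 * ((n * (‖b - a‖₊ / 2) ^ 2 : ℝ≥0) : ℝ)) =
      -2 * L ^ 2 / (b - a) ^ 2 := by
    push_cast
    rw [Real.norm_eq_abs, div_pow, sq_abs, mul_pow, Real.sq_sqrt hn'.le]
    rcases eq_or_ne ((b - a) ^ 2) 0 with h | h
    · simp [h]
    · field_simp
  calc _ ≤ P.real {ω | √n * L ≤ |∑ j ∈ Finset.range n, X j ω - n * μ|} := measureReal_mono hsub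
    _ ≤ _ := by
      rw [← hexponent]
      exact (hasSubgaussianMGF_sum_range_sub_of_mem_Icc hmeas hindep hbdd hmean n
        ).measure_abs_ge_le (by positivity)

end Probability

theorem small_sample_concentration_general
    {Ω : Type*} [MeasurableSpace Ω] (P : Measure Ω) [IsProbabilityMeasure P]
    (X : ℕ → Ω → ℝ) (hmeas : ∀ j, Measurable (X j))
    (hindep : iIndepFun X P)
    (hbdd : ∀ j, ∀ᵐ ω ∂P, X j ω ∈ Set.Icc (0 : ℝ) 1)
    (μ : ℝ) (hmean : ∀ j, ∫ ω, X j ω ∂P = μ)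
    (κ : ℝ) (hκ : 1 ≤ κ) (N : ℕ) (hN : N = ⌈8 * κ⌉₊) :
    ENNReal.ofReal (1 - 1 / (4 * κ)) ≤
      P {ω | ∀ n ∈ Finset.Icc 1 N,
        Real.sqrt n * |(∑ j ∈ Finset.range n, X j ω) / n - μ| ≤
          Real.sqrt (Real.log (8 * κ))} := by
  set L := √(log (8 * κ))
  have hlog : 1 ≤ log (8 * κ) := by
    rw [Real.le_log_iff_exp_le (by positivity)]
    linarith [Real.exp_one_lt_d9]
  have hL : 1 ≤ L := Real.one_le_sqrt.2 hlog
  set B : ℕ → Set Ω := fun n ↦ {ω | L < √n * |(∑ j ∈ Finset.range n, X j ω) / n - μ|}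
  have hB1 : P.real (B 1) = 0 := by
    rw [measureReal_eq_zero_iff, measure_eq_zero_iff_ae_notMem]
    filter_upwards [ae_abs_sub_integral_le_of_mem_Icc (hmeas 0).aemeasurable (hbdd 0)]
      with ω hω
    simp [B, hmean 0] at hω ⊢
    linarith
  have hB : ∀ n, 0 < n → P.real (B n) ≤ 1 / (32 * κ ^ 2) := fun n hn ↦ by
    refine (measureReal_sqrt_mul_abs_empiricalMean_sub_gt_le (fun j ↦ (hmeas j).aemeasurable)
      hindep hbdd hmean hn (by positivity)).trans_eq ?_
    rw [Real.sq_sqrt (by linarith), sub_zero, one_pow, div_one, neg_mul,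
      ← Real.log_rpow (by positivity), Real.exp_neg, Real.exp_log (by positivity), Real.rpow_two]
    field_simp
    ring
  have hcompl : {ω | ∀ n ∈ Finset.Icc 1 N, √n * |(∑ j ∈ Finset.range n, X j ω) / n - μ| ≤ L}ᶜ =
      ⋃ n ∈ Finset.Icc 1 N, B n := by
    ext ω; simp [B, and_assoc]
  have hN1 : 1 ≤ N := hN ▸ Nat.one_le_ceil_iff.2 (by linarith)
  have hNκ : ((N - 1 : ℕ) : ℝ) ≤ 8 * κ := by
    rw [Nat.cast_sub hN1, hN, Nat.cast_one]
    linarith [Nat.ceil_lt_add_one (by positivity : (0 : ℝ) ≤ 8 * κ)]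
  apply ofReal_one_sub_le_measure_of_measureReal_compl_le
  calc _ ≤ ∑ n ∈ Finset.Icc 1 N, P.real (B n) := hcompl ▸ measureReal_biUnion_finset_le _ _
    _ = ∑ n ∈ Finset.Ioc 1 N, P.real (B n) := by
      rw [Finset.Icc_eq_cons_Ioc hN1, Finset.sum_cons, hB1, zero_add]
    _ ≤ (N - 1 : ℕ) * (1 / (32 * κ ^ 2)) := by
      simpa using Finset.sum_le_card_nsmul _ _ _ fun n hn ↦ hB n (Finset.mem_Ioc.1 hn).1.pos
    _ ≤ 8 * κ * (1 / (32 * κ ^ 2)) := by gcongr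
    _ = 1 / (4 * κ) := by field_simp; ring

/-- Small-sample concentration: for i.i.d. `[0,1]`-valued random variables with mean `μ`
and `N = ⌈8κ⌉` with `κ ≥ 1`, the event `√n·|μ̄(n) − μ| ≤ √(log(8κ))` for all
`n = 1,…,N` holds with probability at least `1 − 1/(4κ)`. -/
theorem small_sample_concentration
    {Ω : Type*} [MeasurableSpace Ω] (P : Measure Ω) [IsProbabilityMeasure P]
    (X : ℕ → Ω → ℝ) (hmeas : ∀ j, Measurable (X j))
    (hindep : iIndepFun X P)
    (hident : ∀ j, P.map (X j) = P.map (X 0))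
    (hbdd : ∀ j, ∀ᵐ ω ∂P, X j ω ∈ Set.Icc (0 : ℝ) 1)
    (μ : ℝ) (hmean : ∀ j, ∫ ω, X j ω ∂P = μ)
    (κ : ℝ) (hκ : 1 ≤ κ) (N : ℕ) (hN : N = ⌈8 * κ⌉₊) :
    ENNReal.ofReal (1 - 1 / (4 * κ)) ≤
      P {ω | ∀ n ∈ Finset.Icc 1 N,
        Real.sqrt n * |(∑ j ∈ Finset.range n, X j ω) / n - μ| ≤
          Real.sqrt (Real.log (8 * κ))} :=
  small_sample_concentration_general P X hmeas hindep hbdd μ hmean κ hκ N hN
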